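/- For every finite simple graph G on n vertices in which every vertex has degree at least δ (with δ a natural number), there exists a dominating set S of G with |S| ≤ n·(1 + ln(1+δ))/(1+δ). -/

import Mathlib

/-!
Greedy covering. Let `a = n / (1 + δ)`. Every closed neighbourhood has at least `1 + δ`
vertices, so by double counting some closed neighbourhood contains at least a `1/a` fraction of
any set `U` of vertices not yet dominated. Picking such a vertex repeatedly, the number of picks
needed for `U` is at most `φ(|U|)`, where `φ(x) = x` for `x ≤ a` and `φ(x) = a (1 + log (x / a))`
beyond: `φ` is concave with slope `min 1 (a / x)`, so shrinking `x` by a `1/a` fraction lowers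
`φ` by at least `1`. Finally `φ(n) = n (1 + log (1 + δ)) / (1 + δ)`.
-/

/-- A dominating set of a simple graph: every vertex is in `S` or adjacent to a vertex of `S`. -/
def SimpleGraph.IsDominatingSet {V : Type*} (G : SimpleGraph V) (S : Finset V) : Prop :=
  ∀ v : V, v ∈ S ∨ ∃ u ∈ S, G.Adj u v

open Finset Real

noncomputable def greedyBound (a x : ℝ) : ℝ := if x ≤ a then x else a * (1 + log (x / a))

lemma greedyBound_of_le {a x : ℝ} (h : a ≤ x) : greedyBound a x = a * (1 + log (x / a)) := by
  rw [greedyBound]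
  split_ifs with hx
  · obtain rfl := le_antisymm hx h
    rcases eq_or_ne x 0 with rfl | hx0
    · simp
    · simp [div_self hx0]
  · rfl

lemma greedyBound_add_le {a u u' : ℝ} (ha : 0 < a) (hau : a < u) :
    greedyBound a u' + a / u * (u - u') ≤ greedyBound a u := by
  have hu : 0 < u := ha.trans hau
  rw [greedyBound_of_le hau.le, greedyBound]
  split_ifs with hu'a
  · have hlog : 1 - a / u ≤ log (u / a) := by
      simpa only [inv_div] using one_sub_inv_le_log_of_pos (div_pos hu ha)
    have ht : a / u ≤ 1 := (div_le_one hu).2 hau.le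
    calc u' + a / u * (u - u') = a / u * u + u' * (1 - a / u) := by field_simp; ring
      _ ≤ a + a * (1 - a / u) := by
        rw [div_mul_cancel₀ a hu.ne']; nlinarith
      _ ≤ a * (1 + log (u / a)) := by nlinarith
  · have hu'0 : 0 < u' := ha.trans (not_le.1 hu'a)
    have hlog : 1 - u' / u ≤ log (u / u') := by
      simpa only [inv_div] using one_sub_inv_le_log_of_pos (div_pos hu hu'0)
    have hsplit : log (u / a) = log (u / u') + log (u' / a) := by
      rw [← log_mul (by positivity) (by positivity)]; field_simp
    rw [hsplit]
    calc a * (1 + log (u' / a)) + a / u * (u - u')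
        = a * (1 + log (u' / a)) + a * (1 - u' / u) := by field_simp
      _ ≤ _ := by nlinarith

lemma greedyBound_sub_add_one_le {a u c : ℝ} (ha : 0 < a) (hc : 1 ≤ c) (hu : u ≤ a * c) :
    greedyBound a (u - c) + 1 ≤ greedyBound a u := by
  by_cases hua : u ≤ a
  · rw [greedyBound, if_pos (by linarith), greedyBound, if_pos hua]
    linarith
  · have hu : 0 < u := ha.trans (not_le.1 hua)
    have hstep : 1 ≤ a / u * (u - (u - c)) := by
      rw [sub_sub_cancel, div_mul_eq_mul_div, le_div_iff₀ hu]; linarith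
    linarith [greedyBound_add_le (u' := u - c) ha (not_le.1 hua)]

theorem Finset.exists_subset_biUnion_card_le_greedyBound {ι α : Type*} [DecidableEq ι]
    [DecidableEq α] {f : ι → Finset α} {a : ℝ} (ha : 0 < a)
    (hf : ∀ U : Finset α, U.Nonempty → ∃ i, (#U : ℝ) ≤ a * #(U ∩ f i)) (U : Finset α) :
    ∃ S : Finset ι, U ⊆ S.biUnion f ∧ (#S : ℝ) ≤ greedyBound a #U := by
  induction U using Finset.strongInduction with
  | H U ih =>
  rcases U.eq_empty_or_nonempty with rfl | hU
  · exact ⟨∅, empty_subset _, by simp [greedyBound, ha.le]⟩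
  obtain ⟨i, hi⟩ := hf U hU
  set C := U ∩ f i
  have hCU : C ⊆ U := inter_subset_left
  have hC : C.Nonempty := by
    rw [← card_pos, ← Nat.cast_pos (α := ℝ)]
    exact pos_of_mul_pos_right ((Nat.cast_pos.2 hU.card_pos).trans_le hi) ha.le
  obtain ⟨S, hUS, hS⟩ := ih (U \ C) (sdiff_ssubset hCU hC)
  refine ⟨insert i S, ?_, ?_⟩
  · rw [biUnion_insert, ← union_sdiff_of_subset hCU]
    exact union_subset_union inter_subset_right hUS
  · rw [card_sdiff_of_subset hCU, Nat.cast_sub (card_le_card hCU)] at hS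
    calc (#(insert i S) : ℝ) ≤ #S + 1 := by exact_mod_cast card_insert_le i S
      _ ≤ greedyBound a (#U - #C) + 1 := by linarith
      _ ≤ greedyBound a #U :=
        greedyBound_sub_add_one_le ha (by exact_mod_cast hC.card_pos) hi

namespace SimpleGraph

variable {V : Type*} [Fintype V] [DecidableEq V] (G : SimpleGraph V) [DecidableRel G.Adj]

def closedNeighborFinset (v : V) : Finset V := insert v (G.neighborFinset v)

variable {G}

@[simp]
lemma mem_closedNeighborFinset {u v : V} :
    u ∈ G.closedNeighborFinset v ↔ u = v ∨ G.Adj v u := by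
  simp [closedNeighborFinset]

lemma mem_closedNeighborFinset_comm {u v : V} :
    u ∈ G.closedNeighborFinset v ↔ v ∈ G.closedNeighborFinset u := by
  simp [eq_comm, G.adj_comm]

lemma isDominatingSet_iff_univ_subset_biUnion {S : Finset V} :
    G.IsDominatingSet S ↔ univ ⊆ S.biUnion G.closedNeighborFinset := by
  simp [IsDominatingSet, subset_iff, and_or_left, exists_or]

variable (G)

lemma card_closedNeighborFinset (v : V) : #(G.closedNeighborFinset v) = G.degree v + 1 := by
  simp [closedNeighborFinset]

lemma sum_card_inter_closedNeighborFinset (U : Finset V) :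
    ∑ v, #(U ∩ G.closedNeighborFinset v) = ∑ u ∈ U, (G.degree u + 1) :=
  calc ∑ v, #(U ∩ G.closedNeighborFinset v)
      = ∑ v, #{u ∈ U | v ∈ G.closedNeighborFinset u} := by
        simp_rw [← filter_mem_eq_inter, mem_closedNeighborFinset_comm]
    _ = ∑ u ∈ U, #{v | v ∈ G.closedNeighborFinset u} :=
        (sum_card_bipartiteAbove_eq_sum_card_bipartiteBelow _).symm
    _ = ∑ u ∈ U, (G.degree u + 1) := by
        simp_rw [filter_mem_eq_inter, univ_inter, card_closedNeighborFinset]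

lemma exists_card_le_mul_card_inter_closedNeighborFinset {δ : ℕ} (hδ : ∀ v, δ ≤ G.degree v)
    {U : Finset V} (hU : U.Nonempty) :
    ∃ v, (#U : ℝ) ≤ Fintype.card V / (1 + δ) * #(U ∩ G.closedNeighborFinset v) := by
  have hsum : (1 + δ) * #U ≤ ∑ v, #(U ∩ G.closedNeighborFinset v) := by
    rw [sum_card_inter_closedNeighborFinset, mul_comm, ← smul_eq_mul]
    exact card_nsmul_le_sum _ _ _ fun u _ ↦ by linarith [hδ u]
  obtain ⟨u, -⟩ := hU
  obtain ⟨v, -, hv⟩ := exists_le_of_sum_le ⟨u, mem_univ u⟩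
    (f := fun _ ↦ ((1 + δ) * #U : ℝ))
    (g := fun v ↦ Fintype.card V * (#(U ∩ G.closedNeighborFinset v) : ℝ))
    (by rw [sum_const, card_univ, nsmul_eq_mul, ← mul_sum]; gcongr; exact_mod_cast hsum)
  refine ⟨v, ?_⟩
  rw [div_mul_eq_mul_div, le_div_iff₀ (by positivity)]
  linarith

end SimpleGraph

/-- Every finite simple graph on `n` vertices with minimum degree at least `δ` has a
dominating set of size at most `n·(1 + ln(1+δ))/(1+δ)`. -/
theorem exists_dominatingSet_card_le_log_bound
    {V : Type*} [Fintype V] [DecidableEq V] (G : SimpleGraph V) [DecidableRel G.Adj]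
    (δ : ℕ) (hδ : ∀ v : V, δ ≤ G.degree v) :
    ∃ S : Finset V, G.IsDominatingSet S ∧
      (S.card : ℝ) ≤ (Fintype.card V : ℝ) * (1 + Real.log (1 + (δ : ℝ))) / (1 + (δ : ℝ)) := by
  rcases isEmpty_or_nonempty V with hV | _
  · exact ⟨∅, fun v ↦ hV.elim v, by simp⟩
  have hn : (0 : ℝ) < Fintype.card V := by exact_mod_cast Fintype.card_pos
  have ha : (0 : ℝ) < Fintype.card V / (1 + δ) := by positivity
  obtain ⟨S, hS, hcard⟩ := exists_subset_biUnion_card_le_greedyBound ha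
    (fun _ ↦ G.exists_card_le_mul_card_inter_closedNeighborFinset hδ) univ
  refine ⟨S, SimpleGraph.isDominatingSet_iff_univ_subset_biUnion.2 hS, ?_⟩
  rw [card_univ, greedyBound_of_le (div_le_self hn.le (by simp)), div_div_cancel₀ hn.ne']
    at hcard
  rwa [mul_div_right_comm]
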